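/- An introspective (transitive and Euclidean) and initially synchronous ETL forest has PR (PR_ee and PR_hcl) if and only if it has PR_hcl. -/

import Mathlib

attribute [local instance] Classical.propDecidable

/-- A protocol is a prefix-closed set of histories. -/
def PrefixClosed {E : Type*} (H : Set (List E)) : Prop :=
  ∀ g h : List E, g <+: h → h ∈ H → g ∈ H

/-- Perfect recall with respect to history consistency. -/
def PRhc {E : Type*} (H : Set (List E)) (sim : List E → List E → Prop) : Prop :=
  ∀ (h h' : List E) (e : E), h ∈ H → h ++ [e] ∈ H → h' ∈ H → sim (h ++ [e]) h' →
    ∃ h'', h'' ∈ H ∧ sim h h'' ∧ h'' <+: h'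

/-- Perfect recall with respect to history consistency, local version. -/
def PRhcl {E : Type*} (H : Set (List E)) (sim : List E → List E → Prop) : Prop :=
  ∀ (h h' : List E) (e : E), h ∈ H → h ++ [e] ∈ H → h' ∈ H → sim (h ++ [e]) h' →
    sim h h' ∨
    (∃ (h'' : List E) (e'' : E), h'' ∈ H ∧ sim h h'' ∧ h' = h'' ++ [e'']) ∨
    (∃ (h'' : List E) (e'' : E), h'' ∈ H ∧ sim (h ++ [e]) h'' ∧ h' = h'' ++ [e''])

/-- The information set of a history. -/
def infoSet {E : Type*} (H : Set (List E)) (sim : List E → List E → Prop) (h : List E) :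
    Set (List E) := {h' | h' ∈ H ∧ sim h h'}

/-- The epistemic experience along a history (information sets over all prefixes, in order),
with consecutive repetitions of identical sets removed (destuttered). -/
noncomputable def EEd {E : Type*} (H : Set (List E)) (sim : List E → List E → Prop)
    (h : List E) : List (Set (List E)) :=
  ((List.range (h.length + 1)).map fun n => infoSet H sim (h.take n)).destutter (· ≠ ·)

/-- Perfect recall with respect to epistemic experience: accessible histories have
equivalent epistemic experiences modulo stutterings. -/
def PRee {E : Type*} (H : Set (List E)) (sim : List E → List E → Prop) : Prop :=
  ∀ h h' : List E, h ∈ H → h' ∈ H → sim h h' → EEd H sim h = EEd H sim h'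

def TransOn {E : Type*} (H : Set (List E)) (sim : List E → List E → Prop) : Prop :=
  ∀ a b c : List E, a ∈ H → b ∈ H → c ∈ H → sim a b → sim b c → sim a c

def EuclOn {E : Type*} (H : Set (List E)) (sim : List E → List E → Prop) : Prop :=
  ∀ a b c : List E, a ∈ H → b ∈ H → c ∈ H → sim a b → sim a c → sim b c

/-- S5: the accessibility relation is an equivalence relation on the protocol. -/
def S5on {E : Type*} (H : Set (List E)) (sim : List E → List E → Prop) : Prop :=
  (∀ h ∈ H, sim h h) ∧ (∀ h h' : List E, sim h h' → sim h' h) ∧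
    (∀ a b c : List E, sim a b → sim b c → sim a c)

/-- Synchronous perfect recall. -/
def sPR {E : Type*} (H : Set (List E)) (sim : List E → List E → Prop) : Prop :=
  ∀ (h h' : List E) (e : E), h ∈ H → h ++ [e] ∈ H → h' ∈ H → sim (h ++ [e]) h' →
    ∃ (h'' : List E) (e' : E), h'' ∈ H ∧ sim h h'' ∧ h' = h'' ++ [e']

/-- Weak synchronous perfect recall. -/
def wsPR {E : Type*} (H : Set (List E)) (sim : List E → List E → Prop) : Prop :=
  ∀ (h h' : List E) (e e' : E), h ∈ H → h' ∈ H → h ++ [e] ∈ H → h' ++ [e'] ∈ H →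
    sim (h ++ [e]) (h' ++ [e']) → sim h h'

/-- The reflexive-symmetric closure (= S5 closure on introspective frames). -/
def S5cl {E : Type*} (sim : List E → List E → Prop) (h h' : List E) : Prop :=
  h = h' ∨ sim h h' ∨ sim h' h

def PersistentInsanity {E : Type*} (H : Set (List E)) (sim : List E → List E → Prop) : Prop :=
  ∀ h h' : List E, h ∈ H → h' ∈ H → infoSet H sim h = ∅ → h <+: h' → infoSet H sim h' = ∅

/-- An ETL forest: a set of roots inside the protocol, every history descends from a
root, and the protocol is prefix-closed above roots. -/
def ForestFrame {E : Type*} (H Roots : Set (List E)) : Prop :=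
  Roots ⊆ H ∧ (∀ h ∈ H, ∃ r ∈ Roots, r <+: h) ∧
    (∀ h ∈ H, ∀ r g : List E, r ∈ Roots → r <+: g → g <+: h → g ∈ H)

/-- Initial synchronicity: if a root is accessible to some history, it is accessible
to that history's root. -/
def InitSync {E : Type*} (H Roots : Set (List E)) (sim : List E → List E → Prop) : Prop :=
  ∀ r r' h : List E, r ∈ Roots → r' ∈ Roots → h ∈ H → r <+: h → sim r' h → sim r' r

/-- Epistemic experience in a forest, from root r along h, destuttered. -/
noncomputable def EEdF {E : Type*} (H : Set (List E)) (sim : List E → List E → Prop)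
    (r h : List E) : List (Set (List E)) :=
  ((List.range (h.length - r.length + 1)).map
    fun n => infoSet H sim (h.take (r.length + n))).destutter (· ≠ ·)

/-- PR_ee for forests. -/
def PReeF {E : Type*} (H Roots : Set (List E)) (sim : List E → List E → Prop) : Prop :=
  ∀ h h' r r' : List E, h ∈ H → h' ∈ H → r ∈ Roots → r' ∈ Roots →
    r <+: h → r' <+: h' → sim h h' → EEdF H sim r h = EEdF H sim r' h'


/-! Since `∼` is transitive and Euclidean, related histories have the same information set, so
PR_ee amounts to matching the steps at which the information set changes along two related
histories `h ∼ h'`. This goes by induction on their total length: PR_hcl says that the last step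
of `h` corresponds to no step of `h'`, to the last step of `h'`, or to no step of `h` while `h'`
takes its last step.

At roots, the induction rests on the fact that the last event of a history `x = v ++ [e]` that
considers a root possible does not change its information set. Apply PR_hcl to `v`, `e` and some
`z` with `x ∼ z`: either `v ∼ z`, and we are done; or `x ∼ z'` for `z = z' ++ [e']`, and we
continue with the shorter `z'`; or `v ∼ z'`, and it remains to show the same fact for `z`, which
is reflexive and also considers the root possible. For a reflexive history, initial synchronicity
makes it consider its own root possible, so the descent can start from a `z` shorter than the
history itself, and the fact follows by induction on length. -/

namespace List

variable {α : Type*}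

theorem destutter'_ne_concat [DecidableEq α] (l : List α) (a b : α) :
    (l ++ [a]).destutter' (· ≠ ·) b =
      if l.getLastD b = a then l.destutter' (· ≠ ·) b
      else l.destutter' (· ≠ ·) b ++ [a] := by
  induction l generalizing b with
  | nil => by_cases hba : b = a <;> simp [hba]
  | cons c l ih =>
    by_cases hbc : b = c
    · subst hbc
      simp only [cons_append, destutter'_cons, ne_eq, not_true, if_false, getLastD_cons, ih]
    · simp only [cons_append, destutter'_cons, if_pos hbc, getLastD_cons, ih]
      split_ifs <;> rfl

theorem destutter_ne_concat_concat [DecidableEq α] (l : List α) (a b : α) :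
    (l ++ [b] ++ [a]).destutter (· ≠ ·) =
      if b = a then (l ++ [b]).destutter (· ≠ ·)
      else (l ++ [b]).destutter (· ≠ ·) ++ [a] := by
  cases l with
  | nil => by_cases hba : b = a <;> simp [destutter_pair, hba]
  | cons c l => simp only [cons_append, destutter_cons', destutter'_ne_concat, getLastD_concat]

theorem exists_concat_of_prefix_of_ne {r h : List α} (hrh : r <+: h) (hne : h ≠ r) :
    ∃ g e, h = g ++ [e] ∧ r <+: g := by
  obtain rfl | ⟨g, e, rfl⟩ := h.eq_nil_or_concat'
  · exact absurd (prefix_nil.mp hrh).symm hne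
  · exact ⟨g, e, rfl, (prefix_concat_iff.mp hrh).resolve_left (Ne.symm hne)⟩

end List

section Forest

variable {E : Type*} {H Roots : Set (List E)} {sim : List E → List E → Prop}

theorem EEdF_self (r : List E) : EEdF H sim r r = [infoSet H sim r] := by
  simp [EEdF]

theorem EEdF_concat {r g : List E} (e : E) (hrg : r.length ≤ g.length) :
    EEdF H sim r (g ++ [e]) =
      if infoSet H sim g = infoSet H sim (g ++ [e]) then EEdF H sim r g
      else EEdF H sim r g ++ [infoSet H sim (g ++ [e])] := by
  obtain ⟨k, hk⟩ := Nat.exists_eq_add_of_le hrg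
  have hlen : (g ++ [e]).length - r.length + 1 = k + 1 + 1 := by simp; omega
  have hprefix : ∀ n ∈ List.range (k + 1),
      infoSet H sim ((g ++ [e]).take (r.length + n)) = infoSet H sim (g.take (r.length + n)) := by
    intro n hn
    rw [List.mem_range] at hn
    rw [List.take_append_of_le_length (by omega)]
  have hlen' : g.length - r.length + 1 = k + 1 := by omega
  have hfull : r.length + (k + 1) = (g ++ [e]).length := by simp; omega
  unfold EEdF
  rw [hlen, hlen', List.range_succ, List.map_append, List.map_congr_left hprefix, List.range_succ,
    List.map_append]
  simp only [List.map_singleton, ← hk]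
  rw [hfull, List.take_length, List.take_length, List.destutter_ne_concat_concat]

theorem EEdF_concat_of_infoSet_eq {r g : List E} {e : E} (hrg : r.length ≤ g.length)
    (h : infoSet H sim (g ++ [e]) = infoSet H sim g) :
    EEdF H sim r (g ++ [e]) = EEdF H sim r g := by
  rw [EEdF_concat e hrg, if_pos h.symm]

theorem EEdF_concat_congr {r g s w : List E} {e f : E} (hrg : r.length ≤ g.length)
    (hsw : s.length ≤ w.length) (hEE : EEdF H sim r g = EEdF H sim s w)
    (h : infoSet H sim g = infoSet H sim w)
    (he : infoSet H sim (g ++ [e]) = infoSet H sim (w ++ [f])) :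
    EEdF H sim r (g ++ [e]) = EEdF H sim s (w ++ [f]) := by
  rw [EEdF_concat e hrg, EEdF_concat f hsw, hEE, h, he]

theorem infoSet_eq_of_sim (ht : TransOn H sim) (he : EuclOn H sim) {a b : List E}
    (ha : a ∈ H) (hb : b ∈ H) (hab : sim a b) : infoSet H sim a = infoSet H sim b :=
  Set.ext fun _ => ⟨fun ⟨hc, hac⟩ => ⟨hc, he a b _ ha hb hc hab hac⟩,
    fun ⟨hc, hbc⟩ => ⟨hc, ht a b _ ha hb hc hab hbc⟩⟩

theorem sim_of_infoSet_eq {a b c : List E} (h : infoSet H sim a = infoSet H sim b)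
    (hc : c ∈ H) (hbc : sim b c) : sim a c :=
  (h ▸ (⟨hc, hbc⟩ : c ∈ infoSet H sim b) : c ∈ infoSet H sim a).2

theorem ForestFrame.mem_of_concat_mem (hF : ForestFrame H Roots) {r g : List E} {e : E}
    (hr : r ∈ Roots) (hrg : r <+: g) (hg : g ++ [e] ∈ H) : g ∈ H :=
  hF.2.2 _ hg r g hr hrg (List.prefix_append g [e])

namespace PRhcl

variable (hcl : PRhcl H sim) (ht : TransOn H sim) (he : EuclOn H sim)
include hcl ht he

theorem infoSet_concat_of_sim_of_forall_lt {v : List E} {f : E} (hv : v ∈ H)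
    (hx : v ++ [f] ∈ H) {N : ℕ}
    (hstep : ∀ z f', z ∈ H → z ++ [f'] ∈ H → sim (v ++ [f]) (z ++ [f']) →
      z.length < N → infoSet H sim (z ++ [f']) = infoSet H sim z) :
    ∀ z, z ∈ H → sim (v ++ [f]) z → z.length ≤ N →
      infoSet H sim (v ++ [f]) = infoSet H sim v
  | z, hz, hxz, hzN => by
    obtain hvz | ⟨z', f', hz', hvz', rfl⟩ | ⟨z', f', hz', hxz', rfl⟩ :=
      hcl v z f hv hx hz hxz
    · exact (infoSet_eq_of_sim ht he hx hz hxz).trans (infoSet_eq_of_sim ht he hv hz hvz).symm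
    · rw [List.length_append, List.length_singleton] at hzN
      calc infoSet H sim (v ++ [f])
          = infoSet H sim (z' ++ [f']) := infoSet_eq_of_sim ht he hx hz hxz
        _ = infoSet H sim z' := hstep z' f' hz' hz hxz (by omega)
        _ = infoSet H sim v := (infoSet_eq_of_sim ht he hv hz' hvz').symm
    · rw [List.length_append, List.length_singleton] at hzN
      exact infoSet_concat_of_sim_of_forall_lt hv hx hstep z' hz' hxz' (by omega)
termination_by z => z.length

variable (hF : ForestFrame H Roots) (hsync : InitSync H Roots sim)
include hF hsync

theorem infoSet_concat_of_sim_self_of_sim_root {w : List E} {f : E} {t : List E} (hw : w ∈ H)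
    (hu : w ++ [f] ∈ H) (huu : sim (w ++ [f]) (w ++ [f])) (htR : t ∈ Roots)
    (hut : sim (w ++ [f]) t) : infoSet H sim (w ++ [f]) = infoSet H sim w := by
  have htH := hF.1 htR
  obtain ⟨t₀, ht₀R, ht₀w⟩ := hF.2.1 w hw
  have hut₀ : sim (w ++ [f]) t₀ :=
    ht _ t t₀ hu htH (hF.1 ht₀R) hut <| hsync t₀ t _ ht₀R htR hu
      (ht₀w.trans (List.prefix_append w [f])) (he _ t _ hu htH hu hut huu)
  refine hcl.infoSet_concat_of_sim_of_forall_lt ht he hw hu (N := w.length) ?_ t₀ (hF.1 ht₀R)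
    hut₀ ht₀w.length_le
  intro z f' hz hzf huz _
  exact infoSet_concat_of_sim_self_of_sim_root hz hzf (he _ _ _ hu hzf hzf huz huz) htR
    (he _ _ _ hu hzf htH huz hut)
termination_by w.length

theorem infoSet_concat_of_sim_root {v : List E} {f : E} {t : List E} (hv : v ∈ H)
    (hx : v ++ [f] ∈ H) (htR : t ∈ Roots) (hxt : sim (v ++ [f]) t) :
    infoSet H sim (v ++ [f]) = infoSet H sim v :=
  hcl.infoSet_concat_of_sim_of_forall_lt ht he hv hx (N := t.length)
    (fun _ _ hz hzf hxz _ => hcl.infoSet_concat_of_sim_self_of_sim_root ht he hF hsync hz hzf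
      (he _ _ _ hx hzf hzf hxz hxz) htR (he _ _ _ hx hzf (hF.1 htR) hxz hxt))
    t (hF.1 htR) hxt le_rfl

theorem EEdF_eq_singleton_of_sim_root {x t : List E} (hx : x ∈ H) (htR : t ∈ Roots)
    (htx : t <+: x) (hxt : sim x t) : EEdF H sim t x = [infoSet H sim x] := by
  by_cases hxe : x = t
  · subst hxe
    exact EEdF_self x
  obtain ⟨g, e, rfl, htg⟩ := List.exists_concat_of_prefix_of_ne htx hxe
  have hg := hF.mem_of_concat_mem htR htg hx
  have hinfo := hcl.infoSet_concat_of_sim_root ht he hF hsync hg hx htR hxt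
  rw [EEdF_concat_of_infoSet_eq htg.length_le hinfo, hinfo,
    EEdF_eq_singleton_of_sim_root hg htR htg (sim_of_infoSet_eq hinfo.symm (hF.1 htR) hxt)]
termination_by x.length
decreasing_by simp_all

theorem EEdF_eq_of_sim {h x r s : List E} (hh : h ∈ H) (hx : x ∈ H) (hr : r ∈ Roots)
    (hs : s ∈ Roots) (hrh : r <+: h) (hsx : s <+: x) (hhx : sim h x) :
    EEdF H sim r h = EEdF H sim s x := by
  have hinfo := infoSet_eq_of_sim ht he hh hx hhx
  by_cases hhr : h = r
  · subst hhr
    have hxs : sim x s := sim_of_infoSet_eq hinfo.symm (hF.1 hs) (hsync s h x hs hr hx hsx hhx)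
    rw [EEdF_self, hcl.EEdF_eq_singleton_of_sim_root ht he hF hsync hx hs hsx hxs, hinfo]
  obtain ⟨g, e, rfl, hrg⟩ := List.exists_concat_of_prefix_of_ne hrh hhr
  have hg := hF.mem_of_concat_mem hr hrg hh
  have of_sim_prefix (hgx : sim g x) : EEdF H sim r (g ++ [e]) = EEdF H sim s x := by
    rw [EEdF_concat_of_infoSet_eq hrg.length_le
      (hinfo.trans (infoSet_eq_of_sim ht he hg hx hgx).symm)]
    exact EEdF_eq_of_sim hg hx hr hs hrg hsx hgx
  by_cases hxs : x = s
  · subst hxs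
    exact of_sim_prefix <| sim_of_infoSet_eq
      (hcl.infoSet_concat_of_sim_root ht he hF hsync hg hh hs hhx).symm hx hhx
  obtain hgx | ⟨w, f, hw, hgw, rfl⟩ | ⟨w, f, hw, hhw, rfl⟩ := hcl g x e hg hh hx hhx
  · exact of_sim_prefix hgx
  · have hsw := (List.prefix_concat_iff.mp hsx).resolve_left (Ne.symm hxs)
    exact EEdF_concat_congr hrg.length_le hsw.length_le
      (EEdF_eq_of_sim hg hw hr hs hrg hsw hgw) (infoSet_eq_of_sim ht he hg hw hgw) hinfo
  · have hsw := (List.prefix_concat_iff.mp hsx).resolve_left (Ne.symm hxs)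
    rw [EEdF_concat_of_infoSet_eq hsw.length_le
      (hinfo.symm.trans (infoSet_eq_of_sim ht he hh hw hhw))]
    exact EEdF_eq_of_sim hh hw hr hs hrh hsw hhw
termination_by h.length + x.length
decreasing_by all_goals (simp_all <;> omega)

theorem pReeF : PReeF H Roots sim :=
  fun _ _ _ _ hh hx hr hs hrh hsx hhx =>
    hcl.EEdF_eq_of_sim ht he hF hsync hh hx hr hs hrh hsx hhx

end PRhcl

end Forest

theorem forest_pr_iff_prhcl_general {E : Type*} (H Roots : Set (List E))
    (sim : List E → List E → Prop) (hF : ForestFrame H Roots)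
    (hsync : InitSync H Roots sim)
    (ht : TransOn H sim) (he : EuclOn H sim) :
    (PReeF H Roots sim ∧ PRhcl H sim) ↔ PRhcl H sim :=
  ⟨And.right, fun hcl => ⟨hcl.pReeF ht he hF hsync, hcl⟩⟩

/-- An introspective, initially synchronous ETL forest has PR (PR_ee and PR_hcl)
iff it has PR_hcl. -/
theorem forest_pr_iff_prhcl {E : Type*} [Fintype E] (H Roots : Set (List E))
    (sim : List E → List E → Prop) (hF : ForestFrame H Roots)
    (hsync : InitSync H Roots sim)
    (ht : TransOn H sim) (he : EuclOn H sim) :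
    (PReeF H Roots sim ∧ PRhcl H sim) ↔ PRhcl H sim :=
  forest_pr_iff_prhcl_general H Roots sim hF hsync ht he
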